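/- For all r ≥ 3, the Ramsey number of the unique r-uniform tree T_{2r−1}^{(r)} of order 2r−1 versus K_{r+1}^{(r)} satisfies 2r ≤ R(T_{2r−1}^{(r)}, K_{r+1}^{(r)}; r) ≤ 2r + 1. -/

import Mathlib

/-- `hRamsey E r n` is the Ramsey number `R(H, K_n^{(r)}; r)` where `H` is the
hypergraph with vertex type `V` and hyperedge set `E`. -/
noncomputable def hRamsey {V : Type*} [DecidableEq V] (E : Set (Finset V)) (r n : ℕ) : ℕ :=
  sInf {p | ∀ c : Finset (Fin p) → Bool,
    (∃ f : V → Fin p, Function.Injective f ∧ ∀ e ∈ E, c (e.image f) = true) ∨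
    (∃ g : Fin n → Fin p, Function.Injective g ∧
      ∀ e : Finset (Fin n), e.card = r → c (e.image g) = false)}

/-!
Lower bound: on `p ≤ 2r - 1` vertices, colour an `r`-set red iff it avoids a fixed vertex `y`.
A red copy of the tree covers all `2r - 1 ≥ p` vertices, so one of its edges contains `y`, while
among any `r + 1` vertices there is an `r`-set avoiding `y`.

Upper bound: on `2r + 1` vertices without a blue `K_{r+1}^{(r)}`, every `(r+1)`-set contains a
red `r`-set. Take disjoint red `r`-sets `A`, `B`, the remaining vertex `z`, and `a ∈ A`, `b ∈ B`.
If no two red `r`-sets met in exactly one vertex, the red `r`-set inside `A - a + z + b` would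
have to be `A - a + z`, and likewise `B - b + z` would be red; but these two meet exactly in `z`.
-/

open Finset Function

section Intersection

variable {α : Type*} [DecidableEq α]

lemma inter_eq_singleton_or_eq_of_subset_insert {E T B : Finset α} {b : α}
    (hET : E ⊆ insert b T) (hcard : #E = #T) (hb : b ∈ B) (hTB : Disjoint T B) :
    E ∩ B = {b} ∨ E = T := by
  by_cases hbE : b ∈ E
  · left
    ext x
    simp only [mem_inter, mem_singleton]
    constructor
    · rintro ⟨hxE, hxB⟩
      exact (mem_insert.1 (hET hxE)).resolve_right fun hxT => disjoint_left.1 hTB hxT hxB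
    · rintro rfl
      exact ⟨hbE, hb⟩
  · exact .inr <| eq_of_subset_of_card_le ((subset_insert_iff_of_notMem hbE).1 hET) hcard.ge

lemma card_insert_erase {s : Finset α} {a z : α} (ha : a ∈ s) (hz : z ∉ s) :
    #(insert z (s.erase a)) = #s := by
  rw [card_insert_of_notMem fun h => hz (mem_of_mem_erase h), card_erase_add_one ha]

variable {P : Finset α → Prop} {r : ℕ}

/-- The `(r+1)`-set `A - a + z + b` contains a `P`-set of size `r`; containing `b`, it would meet
`B` exactly in `b`. -/
lemma insert_erase_of_forall_inter_card_ne_one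
    (hP : ∀ S : Finset α, #S = r + 1 → ∃ E ⊆ S, #E = r ∧ P E)
    (hsep : ∀ X Y : Finset α, #X = r → #Y = r → #(X ∩ Y) = 1 → P X → ¬P Y)
    {A B : Finset α} {a b z : α} (hA : #A = r) (hB : #B = r) (hPB : P B) (hAB : Disjoint A B)
    (ha : a ∈ A) (hb : b ∈ B) (hzA : z ∉ A) (hzB : z ∉ B) :
    P (insert z (A.erase a)) := by
  set T := insert z (A.erase a)
  have hT : #T = r := hA ▸ card_insert_erase ha hzA
  have hTB : Disjoint T B :=
    disjoint_insert_left.2 ⟨hzB, hAB.mono_left (erase_subset a A)⟩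
  have hbT : b ∉ T := fun h => disjoint_left.1 hTB h hb
  obtain ⟨E, hET, hE, hPE⟩ := hP (insert b T) (by rw [card_insert_of_notMem hbT, hT])
  rcases inter_eq_singleton_or_eq_of_subset_insert hET (hE.trans hT.symm) hb hTB with hEB | rfl
  · exact absurd hPB (hsep E B hE hB (by rw [hEB, card_singleton]) hPE)
  · exact hPE

lemma exists_inter_card_eq_one [Fintype α] (hr : 0 < r) (hα : Fintype.card α = 2 * r + 1)
    (hP : ∀ S : Finset α, #S = r + 1 → ∃ A ⊆ S, #A = r ∧ P A) :
    ∃ X Y : Finset α, #X = r ∧ #Y = r ∧ #(X ∩ Y) = 1 ∧ P X ∧ P Y := by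
  by_contra! hsep
  obtain ⟨S, -, hS⟩ := exists_subset_card_eq (s := (univ : Finset α)) (n := r + 1)
    (by rw [card_univ]; omega)
  obtain ⟨A, -, hA, hPA⟩ := hP S hS
  obtain ⟨B, hBA, hB, hPB⟩ := hP Aᶜ (by rw [card_compl, hA]; omega)
  have hAB : Disjoint A B := disjoint_left.2 fun x hxA hxB => mem_compl.1 (hBA hxB) hxA
  obtain ⟨z, hz⟩ : ∃ z, z ∉ A ∪ B := by
    by_contra! h
    have := card_le_card (s := univ) fun x _ => h x
    rw [card_union_of_disjoint hAB, card_univ] at this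
    omega
  rw [mem_union, not_or] at hz
  obtain ⟨a, ha⟩ := card_pos.1 (hA ▸ hr)
  obtain ⟨b, hb⟩ := card_pos.1 (hB ▸ hr)
  have hPA' := insert_erase_of_forall_inter_card_ne_one hP hsep hA hB hPB hAB ha hb hz.1 hz.2
  have hPB' := insert_erase_of_forall_inter_card_ne_one hP hsep hB hA hPA hAB.symm hb ha hz.2 hz.1
  have hinter : insert z (A.erase a) ∩ insert z (B.erase b) = {z} := by
    rw [← insert_inter_distrib,
      disjoint_iff_inter_eq_empty.1 (hAB.mono (erase_subset a A) (erase_subset b B))]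
    rfl
  exact hsep _ _ (hA ▸ card_insert_erase ha hz.1) (hB ▸ card_insert_erase hb hz.2)
    (by rw [hinter, card_singleton]) hPA' hPB'

end Intersection

section Embedding

variable {V β : Type*} [DecidableEq β]

lemma exists_image_eq_of_card_eq {s : Finset V} {t : Finset β} (hst : #s = #t) {v : V} {w : β}
    (hv : v ∈ s) (hw : w ∈ t) : ∃ φ : V → β, s.image φ = t ∧ φ v = w := by
  classical
  obtain ⟨g, hg⟩ := exists_equiv_extend_of_card_eq (s := {(⟨v, hv⟩ : s)}) (f := fun _ => w)
    (by simpa using hst) (by simpa using hw) (by simp)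
  refine ⟨fun x => if hx : x ∈ s then g ⟨x, hx⟩ else w, ?_,
    by simpa [hv] using hg _ (mem_singleton_self _)⟩
  ext y
  simp only [mem_image]
  constructor
  · rintro ⟨x, hx, rfl⟩
    simp [hx]
  · intro hy
    exact ⟨g.symm ⟨y, hy⟩, (g.symm ⟨y, hy⟩).2, by simp⟩

lemma exists_injective_image_eq [Fintype V] [DecidableEq V] {e₁ e₂ : Finset V}
    {X Y : Finset β} {v : V} {w : β} (hcover : e₁ ∪ e₂ = univ) (he : e₁ ∩ e₂ = {v})
    (hXY : X ∩ Y = {w}) (h₁ : #e₁ = #X) (h₂ : #e₂ = #Y) :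
    ∃ f : V → β, Injective f ∧ e₁.image f = X ∧ e₂.image f = Y := by
  have hv : v ∈ e₁ ∩ e₂ := he ▸ mem_singleton_self v
  have hw : w ∈ X ∩ Y := hXY ▸ mem_singleton_self w
  obtain ⟨φ₁, hφ₁, hφ₁v⟩ := exists_image_eq_of_card_eq h₁ (mem_inter.1 hv).1 (mem_inter.1 hw).1
  obtain ⟨φ₂, hφ₂, hφ₂v⟩ := exists_image_eq_of_card_eq h₂ (mem_inter.1 hv).2 (mem_inter.1 hw).2
  set f : V → β := fun x => if x ∈ e₁ then φ₁ x else φ₂ x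
  have hf₁ : e₁.image f = X := hφ₁ ▸ image_congr fun x hx => if_pos hx
  have hf₂ : e₂.image f = Y := by
    refine hφ₂ ▸ image_congr fun x hx₂ => ?_
    by_cases hx₁ : x ∈ e₁
    · obtain rfl : x = v := mem_singleton.1 (he ▸ mem_inter.2 ⟨hx₁, hx₂⟩)
      simp [f, hx₁, hφ₁v, hφ₂v]
    · exact if_neg hx₁
  refine ⟨f, ?_, hf₁, hf₂⟩
  -- `f` maps `V = e₁ ∪ e₂` onto `X ∪ Y`, which has the same size.
  rw [← Set.injOn_univ, ← coe_univ, ← card_image_iff, ← hcover, image_union, hf₁, hf₂]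
  have hV := card_union_add_card_inter e₁ e₂
  have hβ := card_union_add_card_inter X Y
  rw [he, card_singleton] at hV
  rw [hXY, card_singleton] at hβ
  omega

end Embedding

section Ramsey

variable {V β : Type*} [DecidableEq β]

def HasRedCopy (E : Set (Finset V)) (c : Finset β → Bool) : Prop :=
  ∃ f : V → β, Injective f ∧ ∀ e ∈ E, c (e.image f) = true

def HasBlueClique (r n : ℕ) (c : Finset β → Bool) : Prop :=
  ∃ g : Fin n → β, Injective g ∧ ∀ e : Finset (Fin n), #e = r → c (e.image g) = false

/-- The arrow relation `p → (E, K_n^{(r)})`. -/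
def Arrows (E : Set (Finset V)) (r n p : ℕ) : Prop :=
  ∀ c : Finset (Fin p) → Bool, HasRedCopy E c ∨ HasBlueClique r n c

lemma hRamsey_eq_sInf [DecidableEq V] (E : Set (Finset V)) (r n : ℕ) :
    hRamsey E r n = sInf {p | Arrows E r n p} :=
  rfl

lemma exists_subset_of_not_hasBlueClique {r n : ℕ} {c : Finset β → Bool}
    (hc : ¬HasBlueClique r n c) (S : Finset β) (hS : #S = n) :
    ∃ A ⊆ S, #A = r ∧ c A = true := by
  by_contra! h
  let g : Fin n → β := fun i => (S.equivFinOfCardEq hS).symm i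
  have hg : Injective g := Subtype.val_injective.comp (Equiv.injective _)
  refine hc ⟨g, hg, fun e he => ?_⟩
  have hgS : e.image g ⊆ S := fun _ hy => by
    obtain ⟨i, -, rfl⟩ := mem_image.1 hy
    exact coe_mem _
  simpa using h _ hgS (by rw [card_image_of_injective e hg, he])

def avoidColoring (y : β) (s : Finset β) : Bool := decide (y ∉ s)

lemma not_hasRedCopy_avoidColoring [Fintype V] [Fintype β] {E : Set (Finset V)}
    (hE : ∀ x : V, ∃ e ∈ E, x ∈ e) (hcard : Fintype.card β ≤ Fintype.card V) (y : β) :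
    ¬HasRedCopy E (avoidColoring y) := by
  rintro ⟨f, hf, hred⟩
  obtain ⟨x, rfl⟩ := (hf.bijective_of_nat_card_le (by simpa using hcard)).surjective y
  obtain ⟨e, he, hx⟩ := hE x
  simpa [avoidColoring, mem_image_of_mem f hx] using hred e he

lemma not_hasBlueClique_avoidColoring {r n : ℕ} (hrn : r < n) (y : β) :
    ¬HasBlueClique r n (avoidColoring y) := by
  rintro ⟨g, hg, hblue⟩
  -- every `r`-subset of the clique contains `y`, so `y` has two preimages
  have hy : ∀ i₀, ∃ j ≠ i₀, g j = y := fun i₀ => by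
    obtain ⟨e, he, hcard⟩ := exists_subset_card_eq (s := univ.erase i₀) (n := r)
      (by rw [card_erase_of_mem (mem_univ _), card_univ, Fintype.card_fin]; omega)
    obtain ⟨j, hj, hjy⟩ := mem_image.1 (by simpa [avoidColoring] using hblue e hcard)
    exact ⟨j, ne_of_mem_erase (he hj), hjy⟩
  obtain ⟨i, -, hi⟩ := hy ⟨0, by omega⟩
  obtain ⟨j, hji, hj⟩ := hy i
  exact hji (hg (hj.trans hi.symm))

lemma card_lt_of_arrows [Fintype V] [Nonempty V] {E : Set (Finset V)} {r n p : ℕ}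
    (hE : ∀ x : V, ∃ e ∈ E, x ∈ e) (hrn : r < n) (h : Arrows E r n p) :
    Fintype.card V < p := by
  by_contra! hp
  obtain ⟨y⟩ : Nonempty (Fin p) := by
    rcases h fun _ => true with ⟨f, -⟩ | ⟨g, -⟩
    exacts [⟨f (Classical.arbitrary V)⟩, ⟨g ⟨0, by omega⟩⟩]
  rcases h (avoidColoring y) with hred | hblue
  · exact not_hasRedCopy_avoidColoring hE (by simpa using hp) y hred
  · exact not_hasBlueClique_avoidColoring hrn y hblue

lemma arrows_of_inter_card_eq_one [Fintype V] [DecidableEq V] {r : ℕ} (hr : 0 < r)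
    {e₁ e₂ : Finset V} (h₁ : #e₁ = r) (h₂ : #e₂ = r) (hint : #(e₁ ∩ e₂) = 1)
    (hcover : e₁ ∪ e₂ = univ) : Arrows {e₁, e₂} r (r + 1) (2 * r + 1) := by
  intro c
  refine or_iff_not_imp_right.2 fun hblue => ?_
  obtain ⟨X, Y, hX, hY, hXY, hcX, hcY⟩ := exists_inter_card_eq_one (P := (c · = true)) hr
    (Fintype.card_fin _) (exists_subset_of_not_hasBlueClique hblue)
  obtain ⟨v, hv⟩ := card_eq_one.1 hint
  obtain ⟨w, hw⟩ := card_eq_one.1 hXY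
  obtain ⟨f, hf, hf₁, hf₂⟩ :=
    exists_injective_image_eq hcover hv hw (h₁.trans hX.symm) (h₂.trans hY.symm)
  refine ⟨f, hf, ?_⟩
  rintro e (rfl | rfl)
  exacts [hf₁ ▸ hcX, hf₂ ▸ hcY]

end Ramsey

theorem stmt_12_general (r : ℕ) {V : Type*} [Fintype V] [DecidableEq V]
    -- `T_{2r-1}^{(r)}`: two `r`-element hyperedges meeting in exactly one vertex:
    (e₁ e₂ : Finset V) (h1 : e₁.card = r) (h2 : e₂.card = r)
    (hint : (e₁ ∩ e₂).card = 1) (hcover : e₁ ∪ e₂ = Finset.univ) :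
    2 * r ≤ hRamsey ({e₁, e₂} : Set (Finset V)) r (r + 1) ∧
      hRamsey ({e₁, e₂} : Set (Finset V)) r (r + 1) ≤ 2 * r + 1 := by
  obtain ⟨v, hv⟩ := card_pos.1 (hint ▸ Nat.one_pos)
  have hr : 0 < r := h1 ▸ card_pos.2 ⟨v, (mem_inter.1 hv).1⟩
  have hcard : Fintype.card V + 1 = 2 * r := by
    rw [← card_univ, ← hcover, ← hint, card_union_add_card_inter, h1, h2, two_mul]
  have hcovered : ∀ x : V, ∃ e ∈ ({e₁, e₂} : Set (Finset V)), x ∈ e := fun x => by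
    simpa [or_comm] using mem_union.1 (hcover ▸ mem_univ x)
  have harrows := arrows_of_inter_card_eq_one hr h1 h2 hint hcover
  rw [hRamsey_eq_sInf]
  have : Nonempty V := ⟨v⟩
  refine ⟨?_, Nat.sInf_le harrows⟩
  exact hcard ▸ le_csInf ⟨_, harrows⟩ fun p => card_lt_of_arrows hcovered (Nat.lt_succ_self r)

theorem stmt_12 (r : ℕ) (hr : 3 ≤ r) {V : Type*} [Fintype V] [DecidableEq V]
    -- `T_{2r-1}^{(r)}`: two `r`-element hyperedges meeting in exactly one vertex:
    (e₁ e₂ : Finset V) (h1 : e₁.card = r) (h2 : e₂.card = r)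
    (hint : (e₁ ∩ e₂).card = 1) (hcover : e₁ ∪ e₂ = Finset.univ) :
    2 * r ≤ hRamsey ({e₁, e₂} : Set (Finset V)) r (r + 1) ∧
      hRamsey ({e₁, e₂} : Set (Finset V)) r (r + 1) ≤ 2 * r + 1 :=
  stmt_12_general r e₁ e₂ h1 h2 hint hcover
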